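/- Let κ ∈ ℂ with Re κ > 0, Im κ > 0 and let Λ_κ be the Fourier multiplier Λ_κ g = ∑_n (n²-κ²)^{-1/2} ĝ(n)e^{int}, using the principal square root. Then there is c > 0 such that for all φ ∈ H^{-1/2}, Re⟨Λ_κ φ, φ̄⟩ ≥ c‖φ‖²_{H^{-1/2}}. -/

import Mathlib

noncomputable def rootK (κ : ℂ) (n : ℤ) : ℂ := ((n : ℂ) ^ 2 - κ ^ 2) ^ ((1 : ℂ) / 2)

/-- The Fourier multiplier Λ_κ : (Λ_κ g)^(n) = (n² - κ²)^{-1/2} ĝ(n). -/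
noncomputable def LamKappa (κ : ℂ) (g : ℤ → ℂ) : ℤ → ℂ := fun n => (rootK κ n)⁻¹ * g n

noncomputable def pairS (f g : ℤ → ℂ) : ℂ := ∑' n : ℤ, f n * g (-n)

noncomputable def conjS (φ : ℤ → ℂ) : ℤ → ℂ := fun n => (starRingEnd ℂ) (φ (-n))

noncomputable def sobWt (s : ℝ) (n : ℤ) : ℝ := if n = 0 then 1 else |(n : ℝ)| ^ (2 * s)

noncomputable def sobNormSq (s : ℝ) (φ : ℤ → ℂ) : ℝ :=
  ∑' n : ℤ, sobWt s n * ‖φ n‖ ^ 2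

/-! The principal root `w n = (n² - κ²)^{1/2}` has positive real part, because `n² - κ²` has
imaginary part `-2 Re κ Im κ < 0` and so stays off the branch cut; and `w n / |n| → 1` as
`|n| → ∞`. Hence, with `⟨n⟩ = max 1 |n| = 1 / sobWt (-1/2) n`, `Re (w n)⁻¹ · ⟨n⟩` and
`‖(w n)⁻¹‖ · ⟨n⟩` are sequences of positive numbers tending to `1`, so they are bounded below and
above by positive constants. Summing against `|φ̂ n|²`, the
upper bound makes the pairing absolutely convergent and the lower bound gives coercivity. -/

open Filter Topology

namespace Complex

lemma re_cpow_one_half_pos {z : ℂ} (hz : z ∈ slitPlane) : 0 < (z ^ (1 / 2 : ℂ)).re := by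
  have hz0 : z ≠ 0 := slitPlane_ne_zero hz
  have harg : z.arg < Real.pi := lt_of_le_of_ne (arg_le_pi z) (slitPlane_arg_ne_pi hz)
  have him : (log z * (1 / 2)).im = z.arg / 2 := by simp [mul_im, log_im]; ring
  rw [cpow_def_of_ne_zero hz0, exp_re, him]
  have := neg_pi_lt_arg z
  exact mul_pos (Real.exp_pos _) (Real.cos_pos_of_mem_Ioo ⟨by linarith, by linarith⟩)

lemma ofReal_mul_cpow {r : ℝ} (hr : 0 < r) (x : ℂ) {s : ℂ} (hs : s ≠ 0) :
    ((r : ℂ) * x) ^ s = (r : ℂ) ^ s * x ^ s := by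
  rcases eq_or_ne x 0 with rfl | hx
  · simp [zero_cpow hs]
  have hr' : (r : ℂ) ≠ 0 := ofReal_ne_zero.mpr hr.ne'
  rw [cpow_def_of_ne_zero (mul_ne_zero hr' hx), cpow_def_of_ne_zero hr', cpow_def_of_ne_zero hx,
    log_ofReal_mul hr hx, ofReal_log hr.le, add_mul, exp_add]

end Complex

lemma tendsto_intCast_inv_cofinite : Tendsto (fun n : ℤ => ((n : ℂ))⁻¹) cofinite (𝓝 0) := by
  rw [tendsto_zero_iff_norm_tendsto_zero]
  simp only [norm_inv, Complex.norm_intCast]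
  exact tendsto_inv_atTop_zero.comp (tendsto_norm_cocompact_atTop.comp Int.tendsto_coe_cofinite)

lemma exists_pos_le_of_tendsto_cofinite {ι : Type*} {f : ι → ℝ} (hf : ∀ i, 0 < f i) {a : ℝ}
    (ha : 0 < a) (h : Tendsto f cofinite (𝓝 a)) : ∃ c > 0, ∀ i, c ≤ f i := by
  obtain ⟨M, hM⟩ := (h.inv₀ ha.ne').bddAbove_range_of_cofinite
  refine ⟨(max M 1)⁻¹, by positivity, fun i => ?_⟩
  have hle : (f i)⁻¹ ≤ max M 1 := (hM ⟨i, rfl⟩).trans (le_max_left _ _)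
  simpa using inv_anti₀ (inv_pos.mpr (hf i)) hle

lemma mul_tsum_le_re_tsum_mul {ι : Type*} {m : ι → ℂ} {w a : ι → ℝ} {c C : ℝ}
    (ha : ∀ i, 0 ≤ a i) (hlow : ∀ i, c * w i ≤ (m i).re) (hup : ∀ i, ‖m i‖ ≤ C * w i)
    (hs : Summable fun i => w i * a i) :
    c * ∑' i, w i * a i ≤ (∑' i, m i * a i).re := by
  have hma : Summable fun i => m i * a i := by
    refine (hs.mul_left C).of_norm_bounded fun i => ?_
    rw [norm_mul, Complex.norm_real, Real.norm_of_nonneg (ha i), ← mul_assoc]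
    exact mul_le_mul_of_nonneg_right (hup i) (ha i)
  rw [Complex.re_tsum hma, ← tsum_mul_left]
  refine Summable.tsum_le_tsum (fun i => ?_) (hs.mul_left c) ?_
  · simpa [Complex.re_mul_ofReal, mul_assoc] using mul_le_mul_of_nonneg_right (hlow i) (ha i)
  · exact (Complex.hasSum_re hma.hasSum).summable

lemma sobWt_pos (s : ℝ) (n : ℤ) : 0 < sobWt s n := by
  unfold sobWt
  split_ifs with hn
  · exact one_pos
  · exact Real.rpow_pos_of_pos (abs_pos.mpr (Int.cast_ne_zero.mpr hn)) _

lemma sobWt_neg_one_half_of_ne_zero {n : ℤ} (hn : n ≠ 0) :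
    sobWt (-(1 / 2)) n = |(n : ℝ)|⁻¹ := by
  rw [sobWt, if_neg hn, show (2 : ℝ) * -(1 / 2) = -1 by norm_num, Real.rpow_neg_one]

lemma pairS_mul_conjS (m φ : ℤ → ℂ) :
    pairS (fun n => m n * φ n) (conjS φ) = ∑' n, m n * ((‖φ n‖ ^ 2 : ℝ) : ℂ) := by
  unfold pairS conjS
  congr 1
  funext n
  rw [neg_neg, mul_assoc, Complex.mul_conj, Complex.normSq_eq_norm_sq, Complex.ofReal_pow]

lemma rootK_mul_sobWt_eventuallyEq (κ : ℂ) :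
    (fun n => rootK κ n * sobWt (-(1 / 2)) n)
      =ᶠ[cofinite] fun n => (1 - κ ^ 2 * ((n : ℂ)⁻¹) ^ 2) ^ (1 / 2 : ℂ) := by
  filter_upwards [eventually_cofinite_ne 0] with n hn
  have habs : 0 < |(n : ℝ)| := abs_pos.mpr (Int.cast_ne_zero.mpr hn)
  have hsplit : (n : ℂ) ^ 2 - κ ^ 2
      = ((|(n : ℝ)| ^ 2 : ℝ) : ℂ) * (1 - κ ^ 2 * ((n : ℂ)⁻¹) ^ 2) := by
    have : (n : ℂ) ≠ 0 := Int.cast_ne_zero.mpr hn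
    rw [sq_abs]
    push_cast
    field_simp
  have hroot : ((|(n : ℝ)| ^ 2 : ℝ) : ℂ) ^ (1 / 2 : ℂ) = |(n : ℝ)| := by
    rw [Complex.ofReal_pow, one_div]
    exact Complex.sq_cpow_two_inv (by rw [Complex.ofReal_re]; exact habs)
  rw [rootK, hsplit, Complex.ofReal_mul_cpow (by positivity) _ (by norm_num), hroot,
    sobWt_neg_one_half_of_ne_zero hn, Complex.ofReal_inv, mul_right_comm,
    mul_inv_cancel₀ (Complex.ofReal_ne_zero.mpr habs.ne'), one_mul]

lemma tendsto_rootK_mul_sobWt (κ : ℂ) :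
    Tendsto (fun n => rootK κ n * sobWt (-(1 / 2)) n) cofinite (𝓝 1) := by
  have hcont : ContinuousAt (fun u : ℂ => (1 - κ ^ 2 * u ^ 2) ^ (1 / 2 : ℂ)) 0 :=
    (continuousAt_const.sub (continuousAt_const.mul (continuousAt_id.pow 2))).cpow
      continuousAt_const (by simp)
  have hlim := hcont.tendsto.comp tendsto_intCast_inv_cofinite
  simp only [ne_eq, OfNat.ofNat_ne_zero, not_false_eq_true, zero_pow, mul_zero, sub_zero,
    Complex.one_cpow] at hlim
  exact hlim.congr' (rootK_mul_sobWt_eventuallyEq κ).symm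

lemma inv_rootK_eq (κ : ℂ) (n : ℤ) :
    (rootK κ n)⁻¹ = (rootK κ n * sobWt (-(1 / 2)) n)⁻¹ * sobWt (-(1 / 2)) n := by
  rw [mul_inv, inv_mul_cancel_right₀ (Complex.ofReal_ne_zero.mpr (sobWt_pos _ n).ne')]

lemma exists_norm_inv_rootK_le (κ : ℂ) :
    ∃ C, ∀ n, ‖(rootK κ n)⁻¹‖ ≤ C * sobWt (-(1 / 2)) n := by
  obtain ⟨C, hC⟩ :=
    ((tendsto_rootK_mul_sobWt κ).inv₀ one_ne_zero).norm.bddAbove_range_of_cofinite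
  refine ⟨C, fun n => ?_⟩
  have hw := sobWt_pos (-(1 / 2)) n
  rw [inv_rootK_eq, norm_mul, Complex.norm_real, Real.norm_of_nonneg hw.le]
  exact mul_le_mul_of_nonneg_right (hC ⟨n, rfl⟩) hw.le

lemma re_inv_rootK_pos {κ : ℂ} (h1 : 0 < κ.re) (h2 : 0 < κ.im) (n : ℤ) :
    0 < ((rootK κ n)⁻¹).re := by
  have him : ((n : ℂ) ^ 2 - κ ^ 2).im ≠ 0 := by
    simp only [sq, Complex.sub_im, Complex.mul_im, Complex.intCast_re, Complex.intCast_im]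
    nlinarith
  have hre : 0 < (rootK κ n).re :=
    Complex.re_cpow_one_half_pos (Complex.mem_slitPlane_iff.mpr (Or.inr him))
  rw [Complex.inv_re]
  exact div_pos hre (Complex.normSq_pos.mpr fun h => by simp [h] at hre)

lemma exists_pos_mul_sobWt_le_re_inv_rootK {κ : ℂ} (h1 : 0 < κ.re) (h2 : 0 < κ.im) :
    ∃ c > 0, ∀ n, c * sobWt (-(1 / 2)) n ≤ ((rootK κ n)⁻¹).re := by
  have hre : ∀ n, ((rootK κ n)⁻¹).re
      = ((rootK κ n * sobWt (-(1 / 2)) n)⁻¹).re * sobWt (-(1 / 2)) n := fun n => by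
    rw [inv_rootK_eq, Complex.re_mul_ofReal]
  have hlim : Tendsto (fun n => ((rootK κ n * sobWt (-(1 / 2)) n)⁻¹).re) cofinite (𝓝 1) := by
    have h := (Complex.continuous_re.tendsto _).comp
      ((tendsto_rootK_mul_sobWt κ).inv₀ one_ne_zero)
    rwa [inv_one, Complex.one_re] at h
  have hpos : ∀ n, 0 < ((rootK κ n * sobWt (-(1 / 2)) n)⁻¹).re := fun n =>
    (mul_pos_iff_of_pos_right (sobWt_pos _ n)).mp (hre n ▸ re_inv_rootK_pos h1 h2 n)
  obtain ⟨c, hc, hle⟩ := exists_pos_le_of_tendsto_cofinite hpos one_pos hlim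
  exact ⟨c, hc, fun n => hre n ▸ mul_le_mul_of_nonneg_right (hle n) (sobWt_pos _ n).le⟩

/-- Coercivity of Λ_κ : there is c > 0 with Re⟨Λ_κ φ, φ̄⟩ ≥ c ‖φ‖²_{H^{-1/2}}. -/
theorem stmt12 (κ : ℂ) (h1 : 0 < κ.re) (h2 : 0 < κ.im) :
    ∃ c : ℝ, 0 < c ∧ ∀ φ : ℤ → ℂ,
      (Summable fun n : ℤ => sobWt (-(1 / 2)) n * ‖φ n‖ ^ 2) →
      c * sobNormSq (-(1 / 2)) φ ≤ (pairS (LamKappa κ φ) (conjS φ)).re := by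
  obtain ⟨c, hc, hlow⟩ := exists_pos_mul_sobWt_le_re_inv_rootK h1 h2
  obtain ⟨C, hup⟩ := exists_norm_inv_rootK_le κ
  refine ⟨c, hc, fun φ hφ => ?_⟩
  unfold LamKappa
  rw [pairS_mul_conjS]
  exact mul_tsum_le_re_tsum_mul (fun n => sq_nonneg _) hlow hup hφ
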